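/- (Reformulation of the demographic-parity problem.) Assume Δ_UM > 0. Then the maximum of U(π) over policies π constrained by S_A(π) = S_B(π) equals the maximum, over real variables z_{yc} for (y,c) ∈ 𝒯_e satisfying 0 ≤ z_{yc} ≤ p(y|c) and ∑_{(y,c) ∈ 𝒯_e} z_{yc} = Δ_UM, of E[Y_+] − ∑_{(y,c) ∈ 𝒯_e} z_{yc}·p(c)·|y|, where E[Y_+] = ∑_{c, y>0} p(c,y)·y and 𝒯_e = {(y,A) : y > 0, p(y|A) > 0} ∪ {(y,B) : y < 0, p(y|B) > 0}. -/

import Mathlib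

/-!
Static setting: `Y` is a finite set of nonzero real qualifications; the two groups
`A`/`B` are encoded as `true`/`false`; `p c y` is the joint pmf on group × qualification.
-/

open Finset Filter Topology
open scoped Classical

noncomputable section

/-- Marginal probability of group `c`. -/
def pG (Y : Finset ℝ) (p : Bool → ℝ → ℝ) (c : Bool) : ℝ := ∑ y ∈ Y, p c y

/-- Conditional pmf `p(y|c)`. -/
def pCond (Y : Finset ℝ) (p : Bool → ℝ → ℝ) (c : Bool) (y : ℝ) : ℝ := p c y / pG Y p c

/-- `p` is a pmf on `{A,B} × Y`, with positive group marginals, and all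
qualifications in `Y` are nonzero. -/
def IsPMF (Y : Finset ℝ) (p : Bool → ℝ → ℝ) : Prop :=
  (∀ y ∈ Y, y ≠ 0) ∧ (∀ c, ∀ y ∈ Y, 0 ≤ p c y) ∧
    (∑ c : Bool, ∑ y ∈ Y, p c y) = 1 ∧ (∀ c, 0 < pG Y p c)

/-- A policy assigns selection probabilities in `[0,1]`. -/
def Admissible (Y : Finset ℝ) (π : Bool → ℝ → ℝ) : Prop :=
  ∀ c, ∀ y ∈ Y, 0 ≤ π c y ∧ π c y ≤ 1

/-- Institution utility `U(π) = ∑ p(c,y)·y·π(c,y)`. -/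
def util (Y : Finset ℝ) (p π : Bool → ℝ → ℝ) : ℝ :=
  ∑ c : Bool, ∑ y ∈ Y, p c y * y * π c y

/-- Selection rate of group `c`. -/
def selRate (Y : Finset ℝ) (p π : Bool → ℝ → ℝ) (c : Bool) : ℝ :=
  ∑ y ∈ Y, pCond Y p c y * π c y

/-- Disparity `Δ(π)`. -/
def disp (Y : Finset ℝ) (p π : Bool → ℝ → ℝ) : ℝ :=
  |selRate Y p π true - selRate Y p π false|

/-- Penalized objective `J(π) = U(π) − λ·g(Δ(π))`. -/
def obj (Y : Finset ℝ) (p : Bool → ℝ → ℝ) (g : ℝ → ℝ) (lam : ℝ) (π : Bool → ℝ → ℝ) : ℝ :=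
  util Y p π - lam * g (disp Y p π)

/-- Optimal policy: admissible maximizer of `J`. -/
def IsOptimal (Y : Finset ℝ) (p : Bool → ℝ → ℝ) (g : ℝ → ℝ) (lam : ℝ)
    (π : Bool → ℝ → ℝ) : Prop :=
  Admissible Y π ∧ ∀ π', Admissible Y π' → obj Y p g lam π' ≤ obj Y p g lam π

/-- `g` is nondecreasing, nonnegative, convex on `[0,∞)` with `g 0 = 0`. -/
def AdmissiblePenalty (g : ℝ → ℝ) : Prop :=
  g 0 = 0 ∧ MonotoneOn g (Set.Ici 0) ∧ ConvexOn ℝ (Set.Ici 0) g ∧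
    ∀ x ∈ Set.Ici (0 : ℝ), 0 ≤ g x

/-- `Pr(Y > 0 | c)`. -/
def posRate (Y : Finset ℝ) (p : Bool → ℝ → ℝ) (c : Bool) : ℝ :=
  ∑ y ∈ Y.filter (fun y => 0 < y), pCond Y p c y

/-- `Δ_UM = Pr(Y>0|A) − Pr(Y>0|B)`. -/
def dUM (Y : Finset ℝ) (p : Bool → ℝ → ℝ) : ℝ := posRate Y p true - posRate Y p false

/-- `E[Y₊] = ∑_{c, y>0} p(c,y)·y`, the unconstrained maximal utility. -/
def eyPos (Y : Finset ℝ) (p : Bool → ℝ → ℝ) : ℝ :=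
  ∑ c : Bool, ∑ y ∈ Y.filter (fun y => 0 < y), p c y * y

/-- The index set `𝒯_e`. -/
def TE (Y : Finset ℝ) (p : Bool → ℝ → ℝ) : Finset (ℝ × Bool) :=
  (Y ×ˢ (Finset.univ : Finset Bool)).filter
    (fun yc => (yc.2 = true ∧ 0 < yc.1 ∧ 0 < pCond Y p true yc.1) ∨
               (yc.2 = false ∧ yc.1 < 0 ∧ 0 < pCond Y p false yc.1))

/-!
Measure a policy `π` by its shortfall `x(y,c) = p(y|c)·|π(c,y) − 1{y>0}|`, the conditional mass
on which it departs from the unconstrained optimum `1{y>0}`. Then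
`U(π) = E[Y₊] − ∑ x(y,c)·p(c)·|y|` and `S_A − S_B = Δ_UM − ∑ ε(y,c)·x(y,c)`, where the sign
`ε(y,c)` is `+1` exactly when `c = A ↔ y > 0`, i.e. on `𝒯_e` and on cells of zero mass.
So the shortfall of a parity policy, restricted to `𝒯_e`, has total at least `Δ_UM`; scaling it
down to total `Δ_UM` only lowers the penalty. Conversely, weights on `𝒯_e` extended by zero are
the shortfall of a parity policy with exactly the corresponding utility.
-/

lemma exists_sum_eq_of_le_sum {ι : Type*} {s : Finset ι} {x b w : ι → ℝ} {d : ℝ}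
    (hx : ∀ i ∈ s, 0 ≤ x i ∧ x i ≤ b i) (hw : ∀ i ∈ s, 0 ≤ w i) (hd : 0 < d)
    (hdx : d ≤ ∑ i ∈ s, x i) :
    ∃ z : ι → ℝ, (∀ i ∈ s, 0 ≤ z i ∧ z i ≤ b i) ∧ ∑ i ∈ s, z i = d ∧
      ∑ i ∈ s, z i * w i ≤ ∑ i ∈ s, x i * w i := by
  set σ := ∑ i ∈ s, x i
  have hσ : 0 < σ := hd.trans_le hdx
  have ht : 0 ≤ d / σ := (div_pos hd hσ).le
  have ht1 : d / σ ≤ 1 := (div_le_one hσ).2 hdx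
  refine ⟨fun i => d / σ * x i, fun i hi => ?_, ?_, ?_⟩
  · obtain ⟨hx0, hxb⟩ := hx i hi
    exact ⟨mul_nonneg ht hx0, (mul_le_of_le_one_left hx0 ht1).trans hxb⟩
  · rw [← mul_sum, div_mul_cancel₀ _ hσ.ne']
  · simp only [mul_assoc, ← mul_sum]
    exact mul_le_of_le_one_left (sum_nonneg fun i hi => mul_nonneg (hx i hi).1 (hw i hi)) ht1

section

variable {Y : Finset ℝ} {p : Bool → ℝ → ℝ}

def shortfall (Y : Finset ℝ) (p π : Bool → ℝ → ℝ) (yc : ℝ × Bool) : ℝ :=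
  pCond Y p yc.2 yc.1 * if 0 < yc.1 then 1 - π yc.2 yc.1 else π yc.2 yc.1

def ofShortfall (Y : Finset ℝ) (p : Bool → ℝ → ℝ) (x : ℝ × Bool → ℝ) (c : Bool) (y : ℝ) : ℝ :=
  if 0 < y then 1 - x (y, c) / pCond Y p c y else x (y, c) / pCond Y p c y

def cellSign (yc : ℝ × Bool) : ℝ :=
  (if yc.2 then 1 else -1) * if 0 < yc.1 then 1 else -1

lemma sum_cells (f : ℝ × Bool → ℝ) :
    ∑ yc ∈ Y ×ˢ univ, f yc = ∑ y ∈ Y, (f (y, true) + f (y, false)) := by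
  rw [sum_product]
  simp only [Fintype.sum_bool]

lemma util_eq_eyPos_sub_shortfall (hpG : ∀ c, pG Y p c ≠ 0) (π : Bool → ℝ → ℝ) :
    util Y p π =
      eyPos Y p - ∑ yc ∈ Y ×ˢ univ, shortfall Y p π yc * (pG Y p yc.2 * |yc.1|) := by
  have hcell : ∀ c y, p c y * y * π c y =
      (if 0 < y then p c y * y else 0) - shortfall Y p π (y, c) * (pG Y p c * |y|) := by
    intro c y
    have hp : p c y = pCond Y p c y * pG Y p c := (div_mul_cancel₀ _ (hpG c)).symm
    rw [shortfall, hp]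
    split_ifs with hy
    · rw [abs_of_pos hy]; ring
    · rw [abs_of_nonpos (not_lt.1 hy)]; ring
  simp only [util, eyPos, hcell, sum_sub_distrib, sum_filter, sum_cells, Fintype.sum_bool,
    sum_add_distrib]

lemma selRate_eq_posRate_sub (π : Bool → ℝ → ℝ) (c : Bool) :
    selRate Y p π c =
      posRate Y p c - ∑ y ∈ Y, (if 0 < y then 1 else -1) * shortfall Y p π (y, c) := by
  have hcell : ∀ y, pCond Y p c y * π c y = (if 0 < y then pCond Y p c y else 0) -
      (if 0 < y then 1 else -1) * shortfall Y p π (y, c) := by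
    intro y
    simp only [shortfall]
    split_ifs <;> ring
  simp only [selRate, posRate, hcell, sum_sub_distrib, sum_filter]

lemma selRate_sub_selRate (π : Bool → ℝ → ℝ) :
    selRate Y p π true - selRate Y p π false =
      dUM Y p - ∑ yc ∈ Y ×ˢ univ, cellSign yc * shortfall Y p π yc := by
  simp only [selRate_eq_posRate_sub, dUM, sum_cells, cellSign, if_true, Bool.false_eq_true,
    if_false, one_mul, neg_mul, sum_add_distrib, sum_neg_distrib]
  ring

lemma shortfall_mem_Icc (hq : ∀ c, ∀ y ∈ Y, 0 ≤ pCond Y p c y) {π : Bool → ℝ → ℝ}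
    (hπ : Admissible Y π) :
    ∀ yc ∈ Y ×ˢ univ, 0 ≤ shortfall Y p π yc ∧ shortfall Y p π yc ≤ pCond Y p yc.2 yc.1 := by
  rintro ⟨y, c⟩ hyc
  have hy : y ∈ Y := (mem_product.1 hyc).1
  obtain ⟨hπ0, hπ1⟩ := hπ c y hy
  have hq := hq c y hy
  simp only [shortfall]
  split_ifs
  · exact ⟨mul_nonneg hq (by linarith), mul_le_of_le_one_right hq (by linarith)⟩
  · exact ⟨mul_nonneg hq hπ0, mul_le_of_le_one_right hq hπ1⟩

lemma admissible_ofShortfall (hq : ∀ c, ∀ y ∈ Y, 0 ≤ pCond Y p c y) {x : ℝ × Bool → ℝ}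
    (hx : ∀ yc ∈ Y ×ˢ univ, 0 ≤ x yc ∧ x yc ≤ pCond Y p yc.2 yc.1) :
    Admissible Y (ofShortfall Y p x) := by
  intro c y hy
  obtain ⟨hx0, hxq⟩ := hx (y, c) (mem_product.2 ⟨hy, mem_univ c⟩)
  have h0 : 0 ≤ x (y, c) / pCond Y p c y := div_nonneg hx0 (hq c y hy)
  have h1 : x (y, c) / pCond Y p c y ≤ 1 := div_le_one_of_le₀ hxq (hq c y hy)
  simp only [ofShortfall]
  split_ifs
  · constructor <;> linarith
  · exact ⟨h0, h1⟩

lemma shortfall_ofShortfall {x : ℝ × Bool → ℝ} {y : ℝ} {c : Bool} (hx0 : 0 ≤ x (y, c))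
    (hxq : x (y, c) ≤ pCond Y p c y) :
    shortfall Y p (ofShortfall Y p x) (y, c) = x (y, c) := by
  -- where `p(y|c) = 0` the bounds force `x = 0`, so the junk value `x / 0 = 0` is harmless
  have hcancel : pCond Y p c y * (x (y, c) / pCond Y p c y) = x (y, c) :=
    mul_div_cancel_of_imp' fun hq => le_antisymm (hq ▸ hxq) hx0
  simp only [shortfall, ofShortfall]
  split_ifs
  · rw [sub_sub_cancel, hcancel]
  · exact hcancel

lemma TE_subset : TE Y p ⊆ Y ×ˢ univ := filter_subset _ _

lemma cellSign_of_mem_TE {yc : ℝ × Bool} (h : yc ∈ TE Y p) : cellSign yc = 1 := by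
  obtain ⟨y, c⟩ := yc
  simp only [TE, mem_filter] at h
  rcases h.2 with ⟨rfl, hy, -⟩ | ⟨rfl, hy, -⟩
  · simp [cellSign, hy]
  · simp [cellSign, not_lt.2 hy.le]

lemma cellSign_mul_le (hY : ∀ y ∈ Y, y ≠ 0) {x : ℝ × Bool → ℝ} {yc : ℝ × Bool}
    (hyc : yc ∈ Y ×ˢ univ) (hx0 : 0 ≤ x yc) (hxq : x yc ≤ pCond Y p yc.2 yc.1) :
    cellSign yc * x yc ≤ if yc ∈ TE Y p then x yc else 0 := by
  split_ifs with hTE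
  · rw [cellSign_of_mem_TE hTE, one_mul]
  -- off `𝒯_e` either the sign is `-1` or the cell has no mass, whence `x ≤ p(y|c) ≤ 0`
  obtain ⟨y, c⟩ := yc
  simp only [TE, mem_filter, hyc, true_and] at hTE
  rcases lt_or_gt_of_ne (hY y (mem_product.1 hyc).1) with hy | hy <;> cases c <;>
    simp_all [cellSign, not_lt.2 hy.le] <;> linarith

lemma sum_cellSign_mul_le_sum_TE (hY : ∀ y ∈ Y, y ≠ 0) {x : ℝ × Bool → ℝ}
    (hx : ∀ yc ∈ Y ×ˢ univ, 0 ≤ x yc ∧ x yc ≤ pCond Y p yc.2 yc.1) :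
    ∑ yc ∈ Y ×ˢ univ, cellSign yc * x yc ≤ ∑ yc ∈ TE Y p, x yc :=
  calc ∑ yc ∈ Y ×ˢ univ, cellSign yc * x yc
      ≤ ∑ yc ∈ Y ×ˢ univ, if yc ∈ TE Y p then x yc else 0 :=
        sum_le_sum fun yc hyc => cellSign_mul_le hY hyc (hx yc hyc).1 (hx yc hyc).2
    _ = ∑ yc ∈ TE Y p, x yc := by rw [sum_ite_mem, inter_eq_right.2 TE_subset]

lemma IsPMF.pCond_nonneg (hp : IsPMF Y p) (c : Bool) {y : ℝ} (hy : y ∈ Y) :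
    0 ≤ pCond Y p c y :=
  div_nonneg (hp.2.1 c y hy) (hp.2.2.2 c).le

theorem exists_TE_weights_of_parity (hp : IsPMF Y p) (hUM : 0 < dUM Y p)
    {π : Bool → ℝ → ℝ} (hπ : Admissible Y π)
    (hrate : selRate Y p π true = selRate Y p π false) :
    ∃ z : ℝ × Bool → ℝ, (∀ yc ∈ TE Y p, 0 ≤ z yc ∧ z yc ≤ pCond Y p yc.2 yc.1) ∧
      ∑ yc ∈ TE Y p, z yc = dUM Y p ∧
      util Y p π ≤ eyPos Y p - ∑ yc ∈ TE Y p, z yc * (pG Y p yc.2 * |yc.1|) := by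
  set x := shortfall Y p π
  have hx := shortfall_mem_Icc (fun c _ hy => hp.pCond_nonneg c hy) hπ
  have hw : ∀ yc ∈ Y ×ˢ univ, 0 ≤ pG Y p yc.2 * |yc.1| :=
    fun yc _ => mul_nonneg (hp.2.2.2 _).le (abs_nonneg _)
  have hsigned : ∑ yc ∈ Y ×ˢ univ, cellSign yc * x yc = dUM Y p := by
    linarith [selRate_sub_selRate (Y := Y) (p := p) π]
  obtain ⟨z, hz, hsum, hpen⟩ := exists_sum_eq_of_le_sum (fun yc hyc => hx yc (TE_subset hyc))
    (fun yc hyc => hw yc (TE_subset hyc)) hUM (hsigned ▸ sum_cellSign_mul_le_sum_TE hp.1 hx)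
  refine ⟨z, hz, hsum, ?_⟩
  calc util Y p π = eyPos Y p - ∑ yc ∈ Y ×ˢ univ, x yc * (pG Y p yc.2 * |yc.1|) :=
        util_eq_eyPos_sub_shortfall (fun c => (hp.2.2.2 c).ne') π
    _ ≤ eyPos Y p - ∑ yc ∈ TE Y p, x yc * (pG Y p yc.2 * |yc.1|) :=
        sub_le_sub_left (sum_le_sum_of_subset_of_nonneg TE_subset
          fun yc hyc _ => mul_nonneg (hx yc hyc).1 (hw yc hyc)) _
    _ ≤ eyPos Y p - ∑ yc ∈ TE Y p, z yc * (pG Y p yc.2 * |yc.1|) := sub_le_sub_left hpen _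

theorem exists_parity_policy_of_TE_weights (hp : IsPMF Y p) {z : ℝ × Bool → ℝ}
    (hz : ∀ yc ∈ TE Y p, 0 ≤ z yc ∧ z yc ≤ pCond Y p yc.2 yc.1)
    (hsum : ∑ yc ∈ TE Y p, z yc = dUM Y p) :
    ∃ π, Admissible Y π ∧ selRate Y p π true = selRate Y p π false ∧
      util Y p π = eyPos Y p - ∑ yc ∈ TE Y p, z yc * (pG Y p yc.2 * |yc.1|) := by
  have hq : ∀ c, ∀ y ∈ Y, 0 ≤ pCond Y p c y := fun c _ hy => hp.pCond_nonneg c hy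
  set x : ℝ × Bool → ℝ := fun yc => if yc ∈ TE Y p then z yc else 0
  have hx : ∀ yc ∈ Y ×ˢ univ, 0 ≤ x yc ∧ x yc ≤ pCond Y p yc.2 yc.1 := by
    intro yc hyc
    simp only [x]
    split_ifs with hTE
    · exact hz yc hTE
    · exact ⟨le_rfl, hq _ _ (mem_product.1 hyc).1⟩
  have hshort : ∀ f : ℝ × Bool → ℝ, ∑ yc ∈ Y ×ˢ univ, shortfall Y p (ofShortfall Y p x) yc * f yc
      = ∑ yc ∈ TE Y p, z yc * f yc := by
    intro f
    rw [sum_congr rfl fun yc hyc => by rw [shortfall_ofShortfall (hx yc hyc).1 (hx yc hyc).2]]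
    simp only [x, ite_mul, zero_mul]
    rw [sum_ite_mem, inter_eq_right.2 TE_subset]
  refine ⟨ofShortfall Y p x, admissible_ofShortfall hq hx, ?_, ?_⟩
  · rw [← sub_eq_zero, selRate_sub_selRate]
    simp_rw [mul_comm (cellSign _)]
    rw [hshort, sum_congr rfl fun yc hyc => by rw [cellSign_of_mem_TE hyc, mul_one], hsum, sub_self]
  · rw [util_eq_eyPos_sub_shortfall (fun c => (hp.2.2.2 c).ne'), hshort]

end

/-- Reformulation of the demographic-parity problem. Assume
`Δ_UM > 0`. The supremum of `U(π)` over admissible policies with equal selection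
rates equals the supremum, over `z : 𝒯_e → ℝ` with `0 ≤ z_{yc} ≤ p(y|c)` and
`∑ z = Δ_UM`, of `E[Y₊] − ∑ z_{yc}·p(c)·|y|`. -/
theorem stmt_8 (Y : Finset ℝ) (p : Bool → ℝ → ℝ) (hp : IsPMF Y p)
    (hUM : 0 < dUM Y p) :
    sSup {v : ℝ | ∃ π, Admissible Y π ∧
        selRate Y p π true = selRate Y p π false ∧ v = util Y p π} =
      sSup {v : ℝ | ∃ z : ℝ × Bool → ℝ,
        (∀ yc ∈ TE Y p, 0 ≤ z yc ∧ z yc ≤ pCond Y p yc.2 yc.1) ∧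
        (∑ yc ∈ TE Y p, z yc) = dUM Y p ∧
        v = eyPos Y p - ∑ yc ∈ TE Y p, z yc * (pG Y p yc.2 * |yc.1|)} := by
  apply csSup_eq_csSup_of_forall_exists_le
  · rintro _ ⟨π, hπ, hrate, rfl⟩
    obtain ⟨z, hz, hsum, hle⟩ := exists_TE_weights_of_parity hp hUM hπ hrate
    exact ⟨_, ⟨z, hz, hsum, rfl⟩, hle⟩
  · rintro _ ⟨z, hz, hsum, rfl⟩
    obtain ⟨π, hπ, hrate, hutil⟩ := exists_parity_policy_of_TE_weights hp hz hsum
    exact ⟨_, ⟨π, hπ, hrate, rfl⟩, hutil.ge⟩
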